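/- arXiv:2602.12664 — 2 statements merged into one kernel-verified Lean document; each statement's English description precedes it below -/
import Mathlib

section
/- Let S ⊆ V with |S| ≥ 3 be a proper or improper subset of the finite set V, and let T_1, …, T_m be proper subsets of S. Then U_{T_1} + ⋯ + U_{T_m} is a proper subspace of U_S. -/
open Submodule Finset

variable {V : Type*} [Fintype V] [DecidableEq V]

/-- The set of nontrivial partitions `Π*(α)` of `α`, encoded as setoids different from `⊤`
(the one-block partition). -/
def NontrivPart (α : Type*) := {P : Setoid α // P ≠ ⊤}

/-- Restriction `P|_S` of a partition of `V` to a subset `S`: the partition of `S` whose blocks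
are the nonempty intersections of blocks of `P` with `S`. -/
def restrictS (S : Set V) (P : Setoid V) : Setoid ↥S := Setoid.comap Subtype.val P

open Classical in
/-- The indicator function `1_{S,π} : Π*(V) → ℝ`, equal to `1` at `P` iff `P|_S = π`. -/
noncomputable def ind (S : Set V) (π : Setoid ↥S) : NontrivPart V → ℝ :=
  fun P => if restrictS S P.1 = π then 1 else 0

/-- The subspace `U_S ⊆ ℝ^{Π*(V)}` spanned by the indicators `1_{S,π}` over nontrivial
partitions `π` of `S` (equal to `{0}` when `|S| ≤ 1`, since then no nontrivial `π` exists). -/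
noncomputable def U (S : Set V) : Submodule ℝ (NontrivPart V → ℝ) :=
  Submodule.span ℝ {f | ∃ π : Setoid ↥S, π ≠ ⊤ ∧ f = ind S π}

/-- Bell number `B n`: the number of partitions (setoids) of an `n`-element set. -/
noncomputable def bell (n : ℕ) : ℕ := Nat.card (Setoid (Fin n))

/-- Stirling number of the second kind `S(u,j)`: the number of partitions of a `u`-element set
into exactly `j` blocks. -/
noncomputable def stirling (u j : ℕ) : ℕ :=
  Nat.card {σ : Setoid (Fin u) // Nat.card (Quotient σ) = j}

/-!
Let `μ(σ) = (-1)^(k+1) (k-1)!` for a partition `σ` of `S` with `k` blocks, and let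
`L f = ∑_{σ ∈ Π*(S)} μ(σ) f(σ̂)`, where `σ̂` extends `σ` by singletons. If `T ⊊ S` misses
`a ∈ S`, then `L 1_{T,π}` is a sum of `μ(σ)` weighted by a function of the restriction of `σ`
to `S \ {a}`. Over the partitions restricting to a fixed partition of `S \ {a}` with `k` blocks,
`a` is either a singleton (`k + 1` blocks) or joins one of the `k` blocks, so the weights add up
to `μ(k + 1) + k μ(k) = 0`. Hence `L` vanishes on every `U_T`, whereas `L 1_{S,⊥} = μ(⊥) ≠ 0`.
-/

instance Setoid.finite {α : Type*} [Finite α] : Finite (Setoid α) :=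
  Finite.of_injective (fun s : Setoid α => ⇑s) fun _ _ h =>
    Setoid.ext fun a b => iff_of_eq (congrFun₂ h a b)

noncomputable instance Setoid.fintype {α : Type*} [Finite α] : Fintype (Setoid α) :=
  Fintype.ofFinite _

/-- The Möbius value `μ(σ, ⊤)` in a partition lattice, for `σ` with `k` blocks: the interval
`[σ, ⊤]` is the lattice of partitions of a `k`-set. -/
noncomputable def mobiusOfBlocks (k : ℕ) : ℝ := (-1) ^ (k + 1) * (k - 1).factorial

noncomputable def mobiusTop {α : Type*} (σ : Setoid α) : ℝ :=
  mobiusOfBlocks (Nat.card (Quotient σ))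

lemma mobiusTop_ne_zero {α : Type*} (σ : Setoid α) : mobiusTop σ ≠ 0 :=
  mul_ne_zero (pow_ne_zero _ (by norm_num)) (Nat.cast_ne_zero.2 (Nat.factorial_ne_zero _))

lemma mobiusOfBlocks_succ_add_mul {k : ℕ} (hk : 1 ≤ k) :
    mobiusOfBlocks (k + 1) + k * mobiusOfBlocks k = 0 := by
  obtain ⟨n, rfl⟩ := Nat.exists_eq_add_of_le' hk
  simp only [mobiusOfBlocks, Nat.add_sub_cancel, Nat.factorial_succ]
  push_cast
  ring

lemma Setoid.eq_of_comap_eq_of_rel_iff {γ : Type*} {a : γ} {σ₁ σ₂ : Setoid γ}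
    (hcomap : Setoid.comap (Subtype.val : {x : γ // x ≠ a} → γ) σ₁ = Setoid.comap Subtype.val σ₂)
    (ha : ∀ x, σ₁ a x ↔ σ₂ a x) : σ₁ = σ₂ := by
  have hsymm : ∀ x, σ₁ x a ↔ σ₂ x a := fun x => by
    rw [Setoid.comm' σ₁, Setoid.comm' σ₂, ha]
  refine Setoid.ext fun x y => ?_
  by_cases hx : x = a
  · exact hx ▸ ha y
  by_cases hy : y = a
  · exact hy ▸ hsymm x
  exact Setoid.ext_iff.1 hcomap ⟨x, hx⟩ ⟨y, hy⟩

section InsertPoint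

variable {γ : Type*} [DecidableEq γ] (a : γ) (σ' : Setoid {x : γ // x ≠ a})

def insertAtClass (t : Option (Quotient σ')) (x : γ) : Option (Quotient σ') :=
  if h : x = a then t else some ⟦⟨x, h⟩⟧

/-- `a` joins the block `t` of `σ'`, or is a singleton when `t = none`. -/
def insertAt (t : Option (Quotient σ')) : Setoid γ := Setoid.ker (insertAtClass a σ' t)

variable {a σ'}

lemma insertAtClass_self (t : Option (Quotient σ')) : insertAtClass a σ' t a = t := dif_pos rfl

lemma insertAtClass_of_ne (t : Option (Quotient σ')) (x : {x : γ // x ≠ a}) :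
    insertAtClass a σ' t x = some ⟦x⟧ := dif_neg x.2

lemma comap_insertAt (t : Option (Quotient σ')) :
    Setoid.comap Subtype.val (insertAt a σ' t) = σ' :=
  Setoid.ext fun x y => by
    rw [Setoid.comap_rel, insertAt, Setoid.ker_def, insertAtClass_of_ne, insertAtClass_of_ne,
      Option.some_inj, Quotient.eq]

lemma insertAt_self_iff (t : Option (Quotient σ')) (x : {x : γ // x ≠ a}) :
    insertAt a σ' t a x ↔ t = some ⟦x⟧ := by
  rw [insertAt, Setoid.ker_def, insertAtClass_self, insertAtClass_of_ne]

lemma insertAt_injective : Function.Injective (insertAt a σ') := by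
  intro t₁ t₂ h
  refine Option.ext fun q => Quotient.inductionOn q fun x => ?_
  rw [← insertAt_self_iff, ← insertAt_self_iff, h]

lemma exists_insertAt_eq {σ : Setoid γ} (hσ : Setoid.comap Subtype.val σ = σ') :
    ∃ t, insertAt a σ' t = σ := by
  have of_rel_iff : ∀ t, (∀ x, t = some (Quotient.mk σ' x) ↔ σ a x) → insertAt a σ' t = σ := by
    intro t ht
    refine Setoid.eq_of_comap_eq_of_rel_iff ((comap_insertAt t).trans hσ.symm) fun x => ?_
    by_cases hx : x = a
    · subst hx
      exact iff_of_true (Setoid.refl' _ _) (Setoid.refl' _ _)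
    · exact (insertAt_self_iff t ⟨x, hx⟩).trans (ht ⟨x, hx⟩)
  by_cases h : ∃ x₀ : {x // x ≠ a}, σ a x₀
  · obtain ⟨x₀, hx₀⟩ := h
    refine ⟨some ⟦x₀⟧, of_rel_iff _ fun x => ?_⟩
    rw [Option.some_inj, Quotient.eq, ← hσ, Setoid.comap_rel]
    exact ⟨σ.trans' hx₀, σ.trans' (σ.symm' hx₀)⟩
  · refine ⟨none, of_rel_iff _ fun x => ?_⟩
    exact iff_of_false (Option.some_ne_none _).symm fun hx => h ⟨x, hx⟩

lemma card_quotient_insertAt_none [Finite γ] :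
    Nat.card (Quotient (insertAt a σ' none)) = Nat.card (Quotient σ') + 1 := by
  have hsurj : Function.Surjective (insertAtClass a σ' none) := by
    rintro (_ | q)
    · exact ⟨a, insertAtClass_self none⟩
    · induction q using Quotient.inductionOn with
      | h x => exact ⟨x, insertAtClass_of_ne none x⟩
  rw [insertAt, Nat.card_congr (Setoid.quotientKerEquivOfSurjective _ hsurj), Finite.card_option]

lemma card_quotient_insertAt_some (q : Quotient σ') :
    Nat.card (Quotient (insertAt a σ' (some q))) = Nat.card (Quotient σ') := by
  have hrange : Set.range (insertAtClass a σ' (some q)) = Set.range some := by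
    refine Set.Subset.antisymm ?_ ?_
    · rintro _ ⟨x, rfl⟩
      by_cases hx : x = a
      · exact ⟨q, by rw [hx, insertAtClass_self]⟩
      · exact ⟨_, (insertAtClass_of_ne _ ⟨x, hx⟩).symm⟩
    · rintro _ ⟨p, rfl⟩
      induction p using Quotient.inductionOn with
      | h x => exact ⟨x, insertAtClass_of_ne _ x⟩
  rw [insertAt, Nat.card_congr (Setoid.quotientKerEquivRange _), hrange,
    Nat.card_range_of_injective (Option.some_injective _)]

end InsertPoint

section MobiusSums

open Classical in
lemma sum_mobiusTop_of_comap_eq {γ : Type*} [Finite γ] [Nontrivial γ] [DecidableEq γ] (a : γ)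
    (σ' : Setoid {x : γ // x ≠ a}) :
    ∑ σ : Setoid γ, (if Setoid.comap Subtype.val σ = σ' then mobiusTop σ else 0) = 0 := by
  have := Fintype.ofFinite (Quotient σ')
  have hfiber : univ.filter (fun σ : Setoid γ => Setoid.comap Subtype.val σ = σ') =
      univ.image (insertAt a σ') := by
    ext σ
    simp only [mem_filter, mem_univ, true_and, mem_image]
    exact ⟨exists_insertAt_eq, fun ⟨t, ht⟩ => ht ▸ comap_insertAt t⟩
  have hblocks : 1 ≤ Nat.card (Quotient σ') := by
    obtain ⟨b, hb⟩ := exists_ne a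
    have : Nonempty (Quotient σ') := ⟨⟦⟨b, hb⟩⟧⟩
    exact Nat.card_pos
  rw [← sum_filter, hfiber, sum_image fun _ _ _ _ h => insertAt_injective h, Fintype.sum_option]
  simp only [mobiusTop, card_quotient_insertAt_none, card_quotient_insertAt_some, sum_const,
    card_univ, nsmul_eq_mul, ← Nat.card_eq_fintype_card]
  exact mobiusOfBlocks_succ_add_mul hblocks

lemma sum_mul_mobiusTop_comap_eq_zero {β γ : Type*} [Finite γ] [Nontrivial γ] [DecidableEq γ]
    (a : γ) (j : β → γ) (hj : ∀ b, j b ≠ a) (f : Setoid β → ℝ) :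
    ∑ σ : Setoid γ, f (Setoid.comap j σ) * mobiusTop σ = 0 := by
  classical
  let j' : β → {x : γ // x ≠ a} := fun b => ⟨j b, hj b⟩
  have hcomap : ∀ σ : Setoid γ, Setoid.comap j σ = Setoid.comap j' (Setoid.comap Subtype.val σ) :=
    fun _ => rfl
  rw [← sum_fiberwise univ (Setoid.comap (Subtype.val : {x : γ // x ≠ a} → γ))]
  refine sum_eq_zero fun σ' _ => ?_
  calc ∑ σ ∈ univ with Setoid.comap Subtype.val σ = σ', f (Setoid.comap j σ) * mobiusTop σ
      = f (Setoid.comap j' σ') * ∑ σ ∈ univ with Setoid.comap Subtype.val σ = σ', mobiusTop σ := by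
        rw [mul_sum]
        exact sum_congr rfl fun σ hσ => by rw [hcomap, (mem_filter.1 hσ).2]
    _ = 0 := by rw [sum_filter, sum_mobiusTop_of_comap_eq, mul_zero]

end MobiusSums

lemma Setoid.comap_top {α β : Type*} (f : α → β) : Setoid.comap f ⊤ = ⊤ :=
  Setoid.eq_top_iff.2 fun _ _ => trivial

section Extension

omit [Fintype V] [DecidableEq V]

open Classical in
noncomputable def extendBySingletons (S : Set V) (σ : Setoid ↥S) : Setoid V :=
  Setoid.ker fun v => if h : v ∈ S then Sum.inl (Quotient.mk σ ⟨v, h⟩) else Sum.inr v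

lemma restrictS_extendBySingletons (S : Set V) (σ : Setoid ↥S) :
    restrictS S (extendBySingletons S σ) = σ :=
  Setoid.ext fun x y => by
    rw [restrictS, Setoid.comap_rel, extendBySingletons, Setoid.ker_def, dif_pos x.2, dif_pos y.2,
      Sum.inl_injective.eq_iff, Quotient.eq]

lemma extendBySingletons_ne_top {S : Set V} {σ : Setoid ↥S} (hσ : σ ≠ ⊤) :
    extendBySingletons S σ ≠ ⊤ := fun h => hσ <| by
  rw [← restrictS_extendBySingletons S σ, h]
  exact Setoid.comap_top _

lemma restrictS_of_subset {T S : Set V} (h : T ⊆ S) (P : Setoid V) :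
    restrictS T P = Setoid.comap (Set.inclusion h) (restrictS S P) :=
  rfl

noncomputable def NontrivPart.extendBySingletons {S : Set V} (σ : {σ : Setoid ↥S // σ ≠ ⊤}) :
    NontrivPart V :=
  ⟨_root_.extendBySingletons S σ.1, extendBySingletons_ne_top σ.2⟩

open Classical in
lemma ind_extendBySingletons {T S : Set V} (h : T ⊆ S) (π : Setoid ↥T)
    (σ : {σ : Setoid ↥S // σ ≠ ⊤}) :
    ind T π (NontrivPart.extendBySingletons σ) =
      if Setoid.comap (Set.inclusion h) σ.1 = π then 1 else 0 := by
  simp only [ind, NontrivPart.extendBySingletons, restrictS_of_subset h,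
    restrictS_extendBySingletons]

end Extension

section Subspaces

omit [DecidableEq V]

variable {T S : Set V}

open Classical in
lemma ind_eq_sum_ind (h : T ⊆ S) (π : Setoid ↥T) :
    ind T π = ∑ σ : Setoid ↥S with Setoid.comap (Set.inclusion h) σ = π, ind S σ := by
  funext P
  simp only [Finset.sum_apply, ind, sum_ite_eq, mem_filter, mem_univ, true_and,
    restrictS_of_subset h]
  congr

lemma U_mono (h : T ⊆ S) : U T ≤ U S := by
  classical
  refine Submodule.span_le.2 ?_
  rintro _ ⟨π, hπ, rfl⟩
  rw [ind_eq_sum_ind h]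
  refine Submodule.sum_mem _ fun σ hσ => Submodule.subset_span ⟨σ, ?_, rfl⟩
  rintro rfl
  exact hπ ((mem_filter.1 hσ).2.symm.trans (Setoid.comap_top _))

open Classical in
noncomputable def mobiusFunctional (S : Set V) : (NontrivPart V → ℝ) →ₗ[ℝ] ℝ :=
  ∑ σ : {σ : Setoid ↥S // σ ≠ ⊤}, mobiusTop σ.1 •
    LinearMap.proj (R := ℝ) (φ := fun _ : NontrivPart V => ℝ) (NontrivPart.extendBySingletons σ)

open Classical in
lemma mobiusFunctional_ind (h : T ⊆ S) {π : Setoid ↥T} (hπ : π ≠ ⊤) :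
    mobiusFunctional S (ind T π) =
      ∑ σ : Setoid ↥S, (if Setoid.comap (Set.inclusion h) σ = π then 1 else 0) * mobiusTop σ := by
  have htop :
      (if Setoid.comap (Set.inclusion h) ⊤ = π then 1 else 0) * mobiusTop (⊤ : Setoid S) = 0 := by
    rw [Setoid.comap_top, if_neg (Ne.symm hπ), zero_mul]
  simp only [mobiusFunctional, LinearMap.sum_apply, LinearMap.smul_apply, LinearMap.proj_apply,
    smul_eq_mul]
  rw [← sum_erase (f := fun σ : Setoid ↥S =>
      (if Setoid.comap (Set.inclusion h) σ = π then 1 else 0) * mobiusTop σ) univ htop,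
    sum_subtype (univ.erase ⊤) (p := (· ≠ ⊤)) (by simp)]
  exact sum_congr rfl fun σ _ => by rw [ind_extendBySingletons h π σ, mul_comm]

lemma U_le_ker_mobiusFunctional (h : T ⊂ S) : U T ≤ LinearMap.ker (mobiusFunctional S) := by
  classical
  refine Submodule.span_le.2 ?_
  rintro _ ⟨π, hπ, rfl⟩
  obtain ⟨a, haS, haT⟩ := Set.exists_of_ssubset h
  obtain ⟨x, -, -⟩ : ∃ x y, ¬ π x y := by simpa [Setoid.eq_top_iff] using hπ
  have hj : ∀ t, Set.inclusion h.1 t ≠ ⟨a, haS⟩ := fun t ht => haT <| by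
    convert t.2
    exact congrArg Subtype.val ht.symm
  have : Nontrivial S := ⟨⟨_, _, hj x⟩⟩
  rw [SetLike.mem_coe, LinearMap.mem_ker, mobiusFunctional_ind h.1 hπ]
  exact sum_mul_mobiusTop_comap_eq_zero _ _ hj fun ρ => if ρ = π then 1 else 0

lemma mobiusFunctional_ind_self {π : Setoid ↥S} (hπ : π ≠ ⊤) :
    mobiusFunctional S (ind S π) = mobiusTop π := by
  classical
  rw [mobiusFunctional_ind subset_rfl hπ]
  simp only [ite_mul, one_mul, zero_mul]
  exact (sum_ite_eq' univ π _).trans (if_pos (mem_univ π))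

end Subspaces

/-- if `|S| ≥ 3` and `T_1, …, T_m` are proper subsets of `S`, then
`U_{T_1} + ⋯ + U_{T_m}` is a proper subspace of `U_S`. -/
theorem stmt7 (S : Set V) (hS : 3 ≤ Nat.card ↥S) (m : ℕ) (T : Fin m → Set V)
    (hT : ∀ i, T i ⊂ S) :
    (⨆ i, U (T i)) < U S := by
  have : Nontrivial S := Finite.one_lt_card_iff_nontrivial.1 (by omega)
  obtain ⟨x, y, hxy⟩ := exists_pair_ne S
  have hbot : (⊥ : Setoid S) ≠ ⊤ := fun h => hxy (Setoid.eq_top_iff.1 h x y)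
  refine SetLike.lt_iff_le_and_exists.2 ⟨iSup_le fun i => U_mono (hT i).1, ind S ⊥,
    Submodule.subset_span ⟨⊥, hbot, rfl⟩, fun hmem => ?_⟩
  have hker := (iSup_le fun i => U_le_ker_mobiusFunctional (hT i)) hmem
  rw [LinearMap.mem_ker, mobiusFunctional_ind_self hbot] at hker
  exact mobiusTop_ne_zero _ hker
end

section
/- Let V be a finite set and H₁ = (V, E₁), H₂ = (V, E₂) two hypergraphs whose edge sets are antichains under inclusion (no hyperedge contains another), with all hyperedges of size ≥ 2. If ∑_{e ∈ E₁} U_e = ∑_{e ∈ E₂} U_e as subspaces of ℝ^{Π*(V)}, then E₁ = E₂. -/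
open Submodule Finset

variable {V : Type*} [Fintype V] [DecidableEq V]

/-!
For a finite set `E` with at least two points let `L_E(h) = ∑_{S ⊆ E} (-1)^|S| h(Q_S)`, where
`Q_S` is the partition whose only non-singleton block is `(V \ E) ∪ S` (the term with `Q_S = ⊤`
is dropped). If `E ⊄ f`, toggling a point `a ∈ E \ f` in `S` does not change `Q_S|_f`, so `L_E`
kills `U_f`; but `L_E(1_{E,⊥}) = 1 - |E| ≠ 0`, since `Q_S|_E = ⊥` exactly when `|S| ≤ 1`.
Hence `U_E ⊆ ∑_{f ∈ F} U_f` forces `E ⊆ f` for some `f ∈ F`, and two antichains each dominated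
by the other coincide.
-/

section
variable {α : Type*}

open Classical in
noncomputable def isolating (T : Set α) : Setoid α :=
  Setoid.ker fun x => if x ∈ T then some x else none

lemma isolating_rel {T : Set α} {x y : α} :
    isolating T x y ↔ x = y ∨ (x ∉ T ∧ y ∉ T) := by
  classical
  change (if x ∈ T then some x else none) = (if y ∈ T then some y else none) ↔ _
  split_ifs <;> aesop

lemma restrictS_rel {S : Set α} {P : Setoid α} {a b : S} : restrictS S P a b ↔ P a b := Iff.rfl

lemma restrictS_top (S : Set α) : restrictS S ⊤ = ⊤ := rfl

lemma restrictS_isolating_congr {f T T' : Set α} (h : ∀ x ∈ f, x ∈ T ↔ x ∈ T') :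
    restrictS f (isolating T) = restrictS f (isolating T') := by
  ext a b
  rw [restrictS_rel, restrictS_rel, isolating_rel, isolating_rel, h a a.2, h b b.2]

lemma restrictS_isolating_sdiff_eq_bot_iff {e : Set α} {S : Finset α} (hS : ↑S ⊆ e) :
    restrictS e (isolating (e \ S)) = ⊥ ↔ S.card ≤ 1 := by
  rw [Finset.card_le_one_iff, Setoid.ext_iff]
  have hmem (a : e) : ↑a ∉ e \ ↑S ↔ ↑a ∈ S := by simp [a.2]
  simp only [restrictS_rel, isolating_rel, Setoid.bot_def, Subtype.ext_iff, hmem]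
  constructor
  · intro h a b ha hb
    exact (h ⟨a, hS ha⟩ ⟨b, hS hb⟩).1 (Or.inr ⟨ha, hb⟩)
  · intro h a b
    exact ⟨fun hab => hab.elim id fun hmem => h hmem.1 hmem.2, Or.inl⟩

lemma Finset.sum_powerset_neg_one_pow_card_mul_eq_zero [DecidableEq α]
    {s : Finset α} {a : α} (ha : a ∈ s) (g : Finset α → ℝ)
    (hg : ∀ t ⊆ s.erase a, g (insert a t) = g t) :
    ∑ t ∈ s.powerset, (-1 : ℝ) ^ t.card * g t = 0 := by
  rw [← Finset.insert_erase ha, Finset.sum_powerset_insert (Finset.notMem_erase a s),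
    ← Finset.sum_add_distrib]
  refine Finset.sum_eq_zero fun t ht => ?_
  have hat : a ∉ t := fun h => Finset.notMem_erase a s (Finset.mem_powerset.1 ht h)
  rw [Finset.card_insert_of_notMem hat, hg t (Finset.mem_powerset.1 ht), pow_succ]
  ring

lemma Finset.sum_powerset_card_le_one (s : Finset α) :
    ∑ t ∈ s.powerset, (if t.card ≤ 1 then (-1 : ℝ) ^ t.card else 0) = 1 - s.card := by
  rw [Finset.sum_powerset_apply_card (fun k => if k ≤ 1 then (-1 : ℝ) ^ k else 0)]
  rcases s.card with _ | n
  · simp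
  · rw [Finset.sum_range_succ', Finset.sum_range_succ', Finset.sum_eq_zero]
    · simp
    · intro k _
      simp

open Classical in
noncomputable def evalNontriv (P : Setoid α) : (NontrivPart α → ℝ) →ₗ[ℝ] ℝ :=
  if hP : P = ⊤ then 0 else LinearMap.proj (⟨P, hP⟩ : NontrivPart α)

open Classical in
lemma evalNontriv_ind {S : Set α} {π : Setoid S} (hπ : π ≠ ⊤) (P : Setoid α) :
    evalNontriv P (ind S π) = if restrictS S P = π then 1 else 0 := by
  by_cases hP : P = ⊤
  · subst hP
    simp [evalNontriv, restrictS_top, Ne.symm hπ]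
  · simp only [evalNontriv, hP, ↓reduceDIte]
    rfl

noncomputable def isolatingAltSum (E : Finset α) : (NontrivPart α → ℝ) →ₗ[ℝ] ℝ :=
  ∑ S ∈ E.powerset, (-1 : ℝ) ^ S.card • evalNontriv (isolating (↑E \ ↑S))

lemma isolatingAltSum_apply (E : Finset α) (h : NontrivPart α → ℝ) :
    isolatingAltSum E h =
      ∑ S ∈ E.powerset, (-1 : ℝ) ^ S.card * evalNontriv (isolating (↑E \ ↑S)) h := by
  simp [isolatingAltSum]

lemma U_le_ker_isolatingAltSum {E : Finset α} {f : Set α} (hEf : ¬ ↑E ⊆ f) :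
    U f ≤ LinearMap.ker (isolatingAltSum E) := by
  classical
  obtain ⟨a, haE, haf⟩ := Set.not_subset.1 hEf
  refine Submodule.span_le.2 ?_
  rintro _ ⟨π, hπ, rfl⟩
  simp only [SetLike.mem_coe, LinearMap.mem_ker, isolatingAltSum_apply, evalNontriv_ind hπ]
  refine Finset.sum_powerset_neg_one_pow_card_mul_eq_zero haE _ fun S _ => ?_
  rw [restrictS_isolating_congr fun x hx => ?_]
  have hxa : x ≠ a := ne_of_mem_of_not_mem hx haf
  simp [hxa]

lemma isolatingAltSum_ind_bot (E : Finset α) (hE : (⊥ : Setoid E) ≠ ⊤) :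
    isolatingAltSum E (ind E ⊥) = 1 - E.card := by
  rw [isolatingAltSum_apply, ← Finset.sum_powerset_card_le_one E]
  refine Finset.sum_congr rfl fun S hS => ?_
  rw [evalNontriv_ind hE,
    restrictS_isolating_sdiff_eq_bot_iff (Finset.coe_subset.2 (Finset.mem_powerset.1 hS))]
  split_ifs <;> simp

lemma Setoid.bot_ne_top [Nontrivial α] : (⊥ : Setoid α) ≠ ⊤ := fun h => by
  obtain ⟨x, y, hxy⟩ := exists_pair_ne α
  exact hxy (Setoid.eq_top_iff.1 h x y)

theorem exists_superset_of_U_le_iSup {e : Set α} {F : Set (Set α)} (he : 2 ≤ Nat.card e)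
    (hle : U e ≤ ⨆ f ∈ F, U f) : ∃ f ∈ F, e ⊆ f := by
  have : Finite e := Nat.finite_of_card_ne_zero (by omega)
  obtain ⟨E, rfl⟩ := (Set.toFinite e).exists_finset_coe
  have : Nontrivial E := Finite.one_lt_card_iff_nontrivial.1 he
  by_contra! hF
  have hker : ⨆ f ∈ F, U f ≤ LinearMap.ker (isolatingAltSum E) :=
    iSup₂_le fun f hf => U_le_ker_isolatingAltSum (hF f hf)
  have hzero := hker (hle (Submodule.subset_span ⟨⊥, Setoid.bot_ne_top, rfl⟩))
  rw [LinearMap.mem_ker, isolatingAltSum_ind_bot E Setoid.bot_ne_top] at hzero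
  rw [Nat.card_coe_set_eq, Set.ncard_coe_finset] at he
  have : (2 : ℝ) ≤ E.card := by exact_mod_cast he
  linarith

end

theorem subset_of_forall_exists_le {β : Type*} [PartialOrder β] {s t : Set β}
    (hs : ∀ a ∈ s, ∀ b ∈ s, a ≤ b → a = b)
    (hst : ∀ a ∈ s, ∃ b ∈ t, a ≤ b) (hts : ∀ b ∈ t, ∃ a ∈ s, b ≤ a) : s ⊆ t := by
  intro a ha
  obtain ⟨b, hb, hab⟩ := hst a ha
  obtain ⟨c, hc, hbc⟩ := hts b hb
  obtain rfl := hs a ha c hc (hab.trans hbc)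
  rwa [le_antisymm hab hbc]

theorem stmt12_general (E₁ E₂ : Set (Set V))
    (hE₁2 : ∀ e ∈ E₁, 2 ≤ Nat.card ↥e) (hE₂2 : ∀ e ∈ E₂, 2 ≤ Nat.card ↥e)
    (hE₁anti : ∀ e ∈ E₁, ∀ f ∈ E₁, e ⊆ f → e = f)
    (hE₂anti : ∀ e ∈ E₂, ∀ f ∈ E₂, e ⊆ f → e = f)
    (hcol : (⨆ e ∈ E₁, U e) = ⨆ e ∈ E₂, U e) :
    E₁ = E₂ := by
  have h₁₂ : ∀ e ∈ E₁, ∃ f ∈ E₂, e ⊆ f := fun e he =>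
    exists_superset_of_U_le_iSup (hE₁2 e he) (hcol ▸ le_biSup U he)
  have h₂₁ : ∀ e ∈ E₂, ∃ f ∈ E₁, e ⊆ f := fun e he =>
    exists_superset_of_U_le_iSup (hE₂2 e he) (hcol.symm ▸ le_biSup U he)
  exact (subset_of_forall_exists_le hE₁anti h₁₂ h₂₁).antisymm
    (subset_of_forall_exists_le hE₂anti h₂₁ h₁₂)

/-- two antichain hypergraphs (all hyperedges of size ≥ 2) with the same subspace
`∑_{e ∈ E} U_e ⊆ ℝ^{Π*(V)}` have the same edge set. -/
theorem stmt12 (E₁ E₂ : Set (Set V))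
    (hE₁fin : E₁.Finite) (hE₂fin : E₂.Finite)
    (hE₁2 : ∀ e ∈ E₁, 2 ≤ Nat.card ↥e) (hE₂2 : ∀ e ∈ E₂, 2 ≤ Nat.card ↥e)
    (hE₁anti : ∀ e ∈ E₁, ∀ f ∈ E₁, e ⊆ f → e = f)
    (hE₂anti : ∀ e ∈ E₂, ∀ f ∈ E₂, e ⊆ f → e = f)
    (hcol : (⨆ e ∈ E₁, U e) = ⨆ e ∈ E₂, U e) :
    E₁ = E₂ :=
  stmt12_general E₁ E₂ hE₁2 hE₂2 hE₁anti hE₂anti hcol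
end
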